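/- arXiv:1611.03174 — 2 statements merged into one kernel-verified Lean document; each statement's English description precedes it below -/
import Mathlib

section
/- Let 𝐇 = H ⊕ Ĥ ⊕ H with J, Ĵ, X as above. A subspace η ⊂ 𝐇 belongs to Sym(𝐇) (i.e. (Jh,k) = 0 for all h,k ∈ η) if and only if Xη is the graph of an isometric linear operator V from a subspace of H ⊕ Ĥ into H (writing 𝐇 = (H ⊕ Ĥ) ⊕ H and identifying Xη ⊂ (H⊕Ĥ) ⊕ H with a set of pairs). Moreover this correspondence η ↦ V is bijective between Sym(𝐇) and all isometries V ∈ [dom V, H] with dom V a subspace of H ⊕ Ĥ. -/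
/- STATEMENT 5: η ∈ Sym(𝐇) iff Xη is the graph of an isometric operator V from a subspace
of H ⊕ Ĥ into H (a subspace G ⊂ (H⊕Ĥ)⊕H is such a graph iff ‖bottom part‖ = ‖top part‖
on G); moreover η ↦ Xη is a bijection between Sym(𝐇) and such graphs. -/

noncomputable section

abbrev bH (p q : ℕ) := EuclideanSpace ℂ (Fin p ⊕ Fin q ⊕ Fin p)

def JL (p q : ℕ) : bH p q →ₗ[ℂ] bH p q where
  toFun y :=
    WithLp.toLp 2 (Sum.elim (fun i => -y (Sum.inr (Sum.inr i)))
      (Sum.elim (fun j => Complex.I * y (Sum.inr (Sum.inl j)))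
        (fun i => y (Sum.inl i))) : (Fin p ⊕ Fin q ⊕ Fin p) → ℂ)
  map_add' x y := by
    ext i
    rcases i with i | j | i <;>
      simp only [Sum.elim_inl, Sum.elim_inr, PiLp.add_apply] <;> ring
  map_smul' c x := by
    ext i
    rcases i with i | j | i <;>
      simp only [Sum.elim_inl, Sum.elim_inr, PiLp.smul_apply, smul_eq_mul,
        RingHom.id_apply] <;> ring
/-- X = (1/√2)[[−iI_H, 0, I_H],[0, √2 I_Ĥ, 0],[iI_H, 0, I_H]]. -/
def XL (p q : ℕ) : bH p q →ₗ[ℂ] bH p q where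
  toFun y :=
    WithLp.toLp 2 (Sum.elim
      (fun i => (Real.sqrt 2 : ℂ)⁻¹ * (-Complex.I * y (Sum.inl i) + y (Sum.inr (Sum.inr i))))
      (Sum.elim (fun j => y (Sum.inr (Sum.inl j)))
        (fun i => (Real.sqrt 2 : ℂ)⁻¹ *
          (Complex.I * y (Sum.inl i) + y (Sum.inr (Sum.inr i))))) : (Fin p ⊕ Fin q ⊕ Fin p) → ℂ)
  map_add' x y := by
    ext i
    rcases i with i | j | i <;>
      simp only [Sum.elim_inl, Sum.elim_inr, PiLp.add_apply] <;> ring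
  map_smul' c x := by
    ext i
    rcases i with i | j | i <;>
      simp only [Sum.elim_inl, Sum.elim_inr, PiLp.smul_apply, smul_eq_mul,
        RingHom.id_apply] <;> ring

/-- The H ⊕ Ĥ part of an element of 𝐇 = (H ⊕ Ĥ) ⊕ H. -/
def topPart (p q : ℕ) (x : bH p q) : EuclideanSpace ℂ (Fin p ⊕ Fin q) :=
  WithLp.toLp 2 (Sum.elim (fun i => x (Sum.inl i)) (fun j => x (Sum.inr (Sum.inl j))) : (Fin p ⊕ Fin q) → ℂ)

/-- The last H part of an element of 𝐇 = (H ⊕ Ĥ) ⊕ H. -/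
def botPart (p q : ℕ) (x : bH p q) : EuclideanSpace ℂ (Fin p) :=
  WithLp.toLp 2 (fun i => x (Sum.inr (Sum.inr i)) : Fin p → ℂ)

/-! In the coordinates `y = X h` the form of `J` is diagonal:
`⟪J h, h⟫ = i (‖y₃‖² - ‖y₁‖² - ‖y₂‖²)`. Hence `η` is `J`-neutral on the diagonal exactly when
`X η` is norm-balanced, and by polarization neutrality on the diagonal is neutrality on all of
`η × η`. Since `X` is invertible, `η ↦ X η` is a bijection of subspaces. -/

open Complex ComplexConjugate

theorem inner_map_eq_zero_of_forall_mem {V : Type*} [NormedAddCommGroup V]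
    [InnerProductSpace ℂ V] (T : V →ₗ[ℂ] V) (η : Submodule ℂ V)
    (hT : ∀ x ∈ η, inner ℂ (T x) x = 0) : ∀ x ∈ η, ∀ y ∈ η, inner ℂ (T x) y = 0 := by
  intro x hx y hy
  have hIx : I • x ∈ η := η.smul_mem I hx
  rw [inner_map_polarization, hT _ (η.add_mem hy hx), hT _ (η.sub_mem hy hx),
    hT _ (η.add_mem hy hIx), hT _ (η.sub_mem hy hIx)]
  simp

theorem EuclideanSpace.ofReal_norm_sq_eq {ι : Type*} [Fintype ι] (x : EuclideanSpace ℂ ι) :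
    (‖x‖ : ℂ) ^ 2 = ∑ i, (‖x i‖ : ℂ) ^ 2 := by
  exact_mod_cast EuclideanSpace.norm_sq_eq x

theorem inv_sqrt_two_mul_self : ((Real.sqrt 2 : ℂ))⁻¹ * ((Real.sqrt 2 : ℂ))⁻¹ = 2⁻¹ := by
  rw [← mul_inv, ← ofReal_mul, Real.mul_self_sqrt zero_le_two, ofReal_ofNat]

theorem conj_neg_mul_add_conj_mul (a c : ℂ) :
    conj (-c) * a + conj a * c =
      I * ((‖(Real.sqrt 2 : ℂ)⁻¹ * (I * a + c)‖ : ℂ) ^ 2 -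
        (‖(Real.sqrt 2 : ℂ)⁻¹ * (-I * a + c)‖ : ℂ) ^ 2) := by
  rw [← conj_mul', ← conj_mul']
  simp only [map_mul, map_add, map_neg, conj_I, map_inv₀, conj_ofReal]
  linear_combination (-2 * (conj a * c - conj c * a)) * inv_sqrt_two_mul_self +
    (2 * (Real.sqrt 2 : ℂ)⁻¹ * (Real.sqrt 2 : ℂ)⁻¹ * (conj a * c - conj c * a)) * I_sq

theorem inner_JL_self (p q : ℕ) (h : bH p q) :
    inner ℂ (JL p q h) h =
      I * ((‖botPart p q (XL p q h)‖ : ℂ) ^ 2 - (‖topPart p q (XL p q h)‖ : ℂ) ^ 2) := by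
  have hH := Finset.sum_congr rfl fun i (_ : i ∈ Finset.univ) =>
    conj_neg_mul_add_conj_mul (h (Sum.inl i)) (h (Sum.inr (Sum.inr i)))
  have hĤ (b : ℂ) : conj (I * b) * b = -I * (‖b‖ : ℂ) ^ 2 := by
    rw [← conj_mul', map_mul, conj_I, mul_assoc]
  rw [Finset.sum_add_distrib, ← Finset.mul_sum, Finset.sum_sub_distrib] at hH
  rw [EuclideanSpace.ofReal_norm_sq_eq, EuclideanSpace.ofReal_norm_sq_eq]
  simp only [JL, XL, topPart, botPart, LinearMap.coe_mk, AddHom.coe_mk, PiLp.inner_apply,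
    RCLike.inner_apply', PiLp.toLp_apply, Fintype.sum_sum_type, Sum.elim_inl, Sum.elim_inr, hĤ,
    ← Finset.mul_sum]
  linear_combination hH

theorem inner_JL_self_eq_zero_iff (p q : ℕ) (h : bH p q) :
    inner ℂ (JL p q h) h = 0 ↔ ‖botPart p q (XL p q h)‖ = ‖topPart p q (XL p q h)‖ := by
  rw [inner_JL_self, mul_eq_zero, or_iff_right I_ne_zero, sub_eq_zero]
  exact_mod_cast sq_eq_sq₀ (norm_nonneg _) (norm_nonneg _)

theorem isotropic_iff_forall_mem_map_XL (p q : ℕ) (η : Submodule ℂ (bH p q)) :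
    (∀ h ∈ η, ∀ k ∈ η, inner ℂ (JL p q h) k = 0) ↔
      ∀ x ∈ η.map (XL p q), ‖botPart p q x‖ = ‖topPart p q x‖ := by
  simp only [Submodule.mem_map, forall_exists_index, and_imp, forall_apply_eq_imp_iff₂,
    ← inner_JL_self_eq_zero_iff]
  exact ⟨fun hη h hh => hη h hh h hh, inner_map_eq_zero_of_forall_mem (JL p q) η⟩

theorem XL_injective (p q : ℕ) : Function.Injective (XL p q) := by
  rw [← LinearMap.ker_eq_bot, LinearMap.ker_eq_bot']
  intro h hX
  have coord (k : Fin p ⊕ Fin q ⊕ Fin p) : XL p q h k = 0 := by rw [hX]; rfl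
  have hs : (Real.sqrt 2 : ℂ)⁻¹ ≠ 0 := by simp
  have hH (i : Fin p) : -I * h (Sum.inl i) + h (Sum.inr (Sum.inr i)) = 0 ∧
      I * h (Sum.inl i) + h (Sum.inr (Sum.inr i)) = 0 := by
    simpa [XL, hs] using And.intro (coord (Sum.inl i)) (coord (Sum.inr (Sum.inr i)))
  ext (i | j | i) <;> rw [PiLp.zero_apply]
  · obtain ⟨h₁, h₃⟩ := hH i
    linear_combination (I / 2) * (h₁ - h₃) + h (Sum.inl i) * I_sq
  · simpa [XL] using coord (Sum.inr (Sum.inl j))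
  · obtain ⟨h₁, h₃⟩ := hH i
    linear_combination (h₁ + h₃) / 2

theorem XL_surjective (p q : ℕ) : Function.Surjective (XL p q) :=
  LinearMap.injective_iff_surjective.mp (XL_injective p q)

theorem stmt5 (p q : ℕ) :
    -- η ∈ Sym(𝐇) iff Xη is the graph of an isometric operator from a subspace of H⊕Ĥ to H
    (∀ η : Submodule ℂ (bH p q),
      (∀ h ∈ η, ∀ k ∈ η, (inner ℂ ((JL p q) h) k : ℂ) = 0) ↔
        (∀ x ∈ η.map (XL p q), ‖botPart p q x‖ = ‖topPart p q x‖)) ∧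
    -- the correspondence η ↦ Xη is injective on Sym(𝐇) ...
    (∀ η₁ η₂ : Submodule ℂ (bH p q),
      (∀ h ∈ η₁, ∀ k ∈ η₁, (inner ℂ ((JL p q) h) k : ℂ) = 0) →
      (∀ h ∈ η₂, ∀ k ∈ η₂, (inner ℂ ((JL p q) h) k : ℂ) = 0) →
      η₁.map (XL p q) = η₂.map (XL p q) → η₁ = η₂) ∧
    -- ... and onto the set of graphs of isometries
    (∀ G : Submodule ℂ (bH p q),
      (∀ x ∈ G, ‖botPart p q x‖ = ‖topPart p q x‖) →
      ∃ η : Submodule ℂ (bH p q),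
        (∀ h ∈ η, ∀ k ∈ η, (inner ℂ ((JL p q) h) k : ℂ) = 0) ∧ η.map (XL p q) = G) := by
  have map_comap (G : Submodule ℂ (bH p q)) : (G.comap (XL p q)).map (XL p q) = G :=
    Submodule.map_comap_eq_of_surjective (XL_surjective p q) G
  refine ⟨isotropic_iff_forall_mem_map_XL p q,
    fun η₁ η₂ _ _ h => Submodule.map_injective_of_injective (XL_injective p q) h,
    fun G hG => ⟨G.comap (XL p q), ?_, map_comap G⟩⟩
  rwa [isotropic_iff_forall_mem_map_XL, map_comap]
end
end

section
/- Let 𝐇 = H ⊕ Ĥ ⊕ H with J as above. For every subspace η ∈ Sym(𝐇) there exists a subspace τ ⊂ 𝐇 such that τ^⊤ ∈ Sym(𝐇), dim τ = ν + ν̂ (the minimal possible dimension), and τ^⊤ ∩ η = {0}. -/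
/-! Let `K = {(a, 0, i a)}` and `R` the reflection in `K`. Then `J = -i R`, so `Sym(𝐇)` consists
of the subspaces neutral for the indefinite form `⟪R x, y⟫ = ⟪P x, P y⟫ - ⟪P' x, P' y⟫`, where
`P`, `P'` are the orthogonal projections onto `K` and `Kᗮ`; and `τ = R Wᗮ` gives `τ^⊤ = W`. So it
suffices to find a neutral `W` with `dim W = dim K = ν` and `W ∩ η = 0`.

A neutral `η` meets neither `K` nor `Kᗮ`, so `P` and `P'` are injective on it, and
`dim (K ⊖ P η) = ν - dim η ≤ ν + ν̂ - dim η = dim (Kᗮ ⊖ P' η)`. Take `W = R η ⊕ graph t` for an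
isometry `t : K ⊖ P η → Kᗮ ⊖ P' η`. The graph is neutral and orthogonal to `η`, hence
neutral-orthogonal to `R η`; and if `y = R x + g ∈ η` then `‖y‖² = ⟪R x, y⟫ + ⟪g, y⟫ = 0`. -/

noncomputable section

open Module Submodule
open scoped InnerProductSpace

section Neutral

variable {𝕜 E : Type*} [RCLike 𝕜] [NormedAddCommGroup E] [InnerProductSpace 𝕜 E]

theorem nonempty_linearIsometry_of_finrank_le {V W : Type*} [NormedAddCommGroup V]
    [InnerProductSpace 𝕜 V] [NormedAddCommGroup W] [InnerProductSpace 𝕜 W]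
    [FiniteDimensional 𝕜 V] [FiniteDimensional 𝕜 W] (h : finrank 𝕜 V ≤ finrank 𝕜 W) :
    Nonempty (V →ₗᵢ[𝕜] W) := by
  let bV := stdOrthonormalBasis 𝕜 V
  let bW := stdOrthonormalBasis 𝕜 W
  let f : V →ₗ[𝕜] W := bV.toBasis.constr 𝕜 (fun i => bW (Fin.castLE h i))
  have hf : Orthonormal 𝕜 (f ∘ bV.toBasis) := by
    have : f ∘ bV.toBasis = fun i => bW (Fin.castLE h i) :=
      funext (bV.toBasis.constr_basis 𝕜 _)
    rw [this]
    exact bW.orthonormal.comp _ (Fin.castLE_injective h)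
  exact ⟨f.isometryOfOrthonormal (by simp [bV.orthonormal]) hf⟩

theorem inner_reflection_left (K : Submodule 𝕜 E) [K.HasOrthogonalProjection] (x y : E) :
    ⟪K.reflection x, y⟫_𝕜 = ⟪x, K.reflection y⟫_𝕜 := by
  rw [← K.reflection.inner_map_map, reflection_reflection]

theorem finrank_map_starProjection_of_disjoint (K : Submodule 𝕜 E) [K.HasOrthogonalProjection]
    {η : Submodule 𝕜 E} [FiniteDimensional 𝕜 η] (h : Disjoint η Kᗮ) :
    finrank 𝕜 (η.map (K.starProjection : E →ₗ[𝕜] E)) = finrank 𝕜 η := by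
  rw [← LinearMap.range_domRestrict]
  refine LinearMap.finrank_range_of_inj (LinearMap.injective_domRestrict_iff.mpr ?_)
  rwa [ker_starProjection]

theorem inf_orthogonal_map_starProjection_le (K : Submodule 𝕜 E) [K.HasOrthogonalProjection]
    (η : Submodule 𝕜 E) : (η.map (K.starProjection : E →ₗ[𝕜] E))ᗮ ⊓ K ≤ ηᗮ := by
  rintro a ⟨ha, haK⟩ x hx
  rw [← starProjection_eq_self_iff.mpr haK, ← inner_starProjection_left_eq_right]
  exact inner_right_of_mem_orthogonal (mem_map_of_mem hx) ha

theorem reflection_mem_sup (K : Submodule 𝕜 E) [K.HasOrthogonalProjection]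
    {A B : Submodule 𝕜 E} (hA : A ≤ K) (hB : B ≤ Kᗮ) {v : E} (hv : v ∈ A ⊔ B) :
    K.reflection v ∈ A ⊔ B := by
  obtain ⟨a, ha, b, hb, rfl⟩ := mem_sup.mp hv
  rw [map_add, reflection_mem_subspace_eq_self (hA ha),
    reflection_mem_subspace_orthogonalComplement_eq_neg (hB hb)]
  exact add_mem (mem_sup_left ha) (neg_mem (mem_sup_right hb))

def isometryGraph {A B : Submodule 𝕜 E} (t : A →ₗᵢ[𝕜] B) : Submodule 𝕜 E :=
  LinearMap.range (A.subtype + B.subtype ∘ₗ t.toLinearMap)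

section isometryGraph

variable {A B : Submodule 𝕜 E} (t : A →ₗᵢ[𝕜] B)

theorem isometryGraph_le_sup : isometryGraph t ≤ A ⊔ B := by
  rintro _ ⟨a, rfl⟩
  exact add_mem (mem_sup_left a.2) (mem_sup_right (t a).2)

theorem finrank_isometryGraph [FiniteDimensional 𝕜 A] (hAB : Disjoint A B) :
    finrank 𝕜 (isometryGraph t) = finrank 𝕜 A := by
  refine LinearMap.finrank_range_of_inj (LinearMap.ker_eq_bot.mp (LinearMap.ker_eq_bot'.mpr ?_))
  intro a (ha : (a : E) + t a = 0)
  have haB : (a : E) ∈ B := by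
    rw [eq_neg_of_add_eq_zero_left ha]
    exact neg_mem (t a).2
  exact Subtype.ext (disjoint_def.mp hAB a a.2 haB)

end isometryGraph

section

variable (K : Submodule 𝕜 E) [K.HasOrthogonalProjection]

/-- Neutrality for the indefinite inner product `[x, y] = ⟪K.reflection x, y⟫` of a Krein space
whose fundamental symmetry is the reflection in `K`. -/
def IsNeutral (η : Submodule 𝕜 E) : Prop :=
  ∀ x ∈ η, ∀ y ∈ η, ⟪K.reflection x, y⟫_𝕜 = 0

variable {K}

theorem IsNeutral.disjoint_orthogonal {η : Submodule 𝕜 E} (hη : IsNeutral K η) :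
    Disjoint η Kᗮ := by
  refine disjoint_def.mpr fun x hx hxK => ?_
  have := hη x hx x hx
  rwa [reflection_mem_subspace_orthogonalComplement_eq_neg hxK, inner_neg_left, neg_eq_zero,
    inner_self_eq_zero] at this

theorem IsNeutral.disjoint {η : Submodule 𝕜 E} (hη : IsNeutral K η) : Disjoint η K := by
  refine disjoint_def.mpr fun x hx hxK => ?_
  have := hη x hx x hx
  rwa [reflection_mem_subspace_eq_self hxK, inner_self_eq_zero] at this

theorem IsNeutral.map_reflection {η : Submodule 𝕜 E} (hη : IsNeutral K η) :
    IsNeutral K (η.map (K.reflection : E →ₗ[𝕜] E)) := by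
  rintro _ ⟨x, hx, rfl⟩ _ ⟨y, hy, rfl⟩
  change ⟪K.reflection (K.reflection x), K.reflection y⟫_𝕜 = 0
  rw [reflection_reflection, ← inner_reflection_left]
  exact hη x hx y hy

theorem IsNeutral.sup {η ξ : Submodule 𝕜 E} (hη : IsNeutral K η) (hξ : IsNeutral K ξ)
    (h : ∀ x ∈ η, ∀ y ∈ ξ, ⟪K.reflection x, y⟫_𝕜 = 0) : IsNeutral K (η ⊔ ξ) := by
  have h' : ∀ y ∈ ξ, ∀ x ∈ η, ⟪K.reflection y, x⟫_𝕜 = 0 := fun y hy x hx => by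
    rw [inner_reflection_left, inner_eq_zero_symm]
    exact h x hx y hy
  intro u hu v hv
  obtain ⟨x, hx, y, hy, rfl⟩ := mem_sup.mp hu
  obtain ⟨x', hx', y', hy', rfl⟩ := mem_sup.mp hv
  simp only [map_add, inner_add_left, inner_add_right, hη x hx x' hx', hξ y hy y' hy',
    h x hx y' hy', h' y hy x' hx', add_zero]

theorem isNeutral_isometryGraph {A B : Submodule 𝕜 E} (t : A →ₗᵢ[𝕜] B) (hA : A ≤ K)
    (hB : B ≤ Kᗮ) : IsNeutral K (isometryGraph t) := by
  rintro _ ⟨a, rfl⟩ _ ⟨a', rfl⟩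
  simp only [LinearMap.add_apply, LinearMap.comp_apply, subtype_apply,
    LinearIsometry.coe_toLinearMap, map_add, reflection_mem_subspace_eq_self (hA a.2),
    reflection_mem_subspace_orthogonalComplement_eq_neg (hB (t a).2), inner_add_left,
    inner_add_right, inner_neg_left, inner_right_of_mem_orthogonal (hA a.2) (hB (t a').2),
    inner_left_of_mem_orthogonal (hA a'.2) (hB (t a).2), ← coe_inner, t.inner_map_map]
  ring

end

theorem finrank_add_finrank_inf_orthogonal_map_starProjection (K : Submodule 𝕜 E)
    [K.HasOrthogonalProjection] [FiniteDimensional 𝕜 K] {η : Submodule 𝕜 E}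
    [FiniteDimensional 𝕜 η] (h : Disjoint η Kᗮ) :
    finrank 𝕜 η + finrank 𝕜 ((η.map (K.starProjection : E →ₗ[𝕜] E))ᗮ ⊓ K : Submodule 𝕜 E) =
      finrank 𝕜 K := by
  rw [← finrank_map_starProjection_of_disjoint K h]
  refine finrank_add_inf_finrank_orthogonal ?_
  rintro _ ⟨x, -, rfl⟩
  exact K.starProjection_apply_mem x

theorem map_reflection_inf_eq_bot (K : Submodule 𝕜 E) [K.HasOrthogonalProjection]
    {η G : Submodule 𝕜 E} (hG : ∀ g ∈ G, K.reflection g ∈ ηᗮ) :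
    η.map (K.reflection : E →ₗ[𝕜] E) ⊓ G = ⊥ := by
  refine eq_bot_iff.mpr ?_
  rintro _ ⟨⟨x, hx, rfl⟩, hg⟩
  change K.reflection x ∈ G at hg
  rw [mem_bot, ← inner_self_eq_zero (𝕜 := 𝕜)]
  change ⟪K.reflection x, K.reflection x⟫_𝕜 = 0
  rw [inner_reflection_left]
  exact inner_right_of_mem_orthogonal hx (hG _ hg)

section

variable {K : Submodule 𝕜 E} [K.HasOrthogonalProjection] {η G : Submodule 𝕜 E}

theorem IsNeutral.map_reflection_sup (hη : IsNeutral K η) (hG : IsNeutral K G) (hGη : G ≤ ηᗮ) :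
    IsNeutral K (η.map (K.reflection : E →ₗ[𝕜] E) ⊔ G) := by
  refine hη.map_reflection.sup hG ?_
  rintro _ ⟨x, hx, rfl⟩ g hg
  change ⟪K.reflection (K.reflection x), g⟫_𝕜 = 0
  rw [reflection_reflection]
  exact inner_right_of_mem_orthogonal hx (hGη hg)

theorem IsNeutral.map_reflection_sup_inf_eq_bot (hη : IsNeutral K η) (hGη : G ≤ ηᗮ) :
    (η.map (K.reflection : E →ₗ[𝕜] E) ⊔ G) ⊓ η = ⊥ := by
  refine eq_bot_iff.mpr ?_
  rintro _ ⟨hyW, hyη⟩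
  obtain ⟨_, ⟨x, hx, rfl⟩, g, hg, rfl⟩ := mem_sup.mp hyW
  rw [mem_bot, ← inner_self_eq_zero (𝕜 := 𝕜), inner_add_left,
    inner_left_of_mem_orthogonal hyη (hGη hg), add_zero]
  exact hη x hx _ hyη

end

theorem IsNeutral.exists_isNeutral_finrank_eq_inf_eq_bot [FiniteDimensional 𝕜 E]
    {K η : Submodule 𝕜 E} (hK : finrank 𝕜 K ≤ finrank 𝕜 Kᗮ) (hη : IsNeutral K η) :
    ∃ W : Submodule 𝕜 E, IsNeutral K W ∧ finrank 𝕜 W = finrank 𝕜 K ∧ W ⊓ η = ⊥ := by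
  set A : Submodule 𝕜 E := (η.map (K.starProjection : E →ₗ[𝕜] E))ᗮ ⊓ K
  set B : Submodule 𝕜 E := (η.map (Kᗮ.starProjection : E →ₗ[𝕜] E))ᗮ ⊓ Kᗮ
  have hA : finrank 𝕜 η + finrank 𝕜 A = finrank 𝕜 K :=
    finrank_add_finrank_inf_orthogonal_map_starProjection K hη.disjoint_orthogonal
  have hB : finrank 𝕜 η + finrank 𝕜 B = finrank 𝕜 Kᗮ :=
    finrank_add_finrank_inf_orthogonal_map_starProjection Kᗮ
      (by rw [orthogonal_orthogonal]; exact hη.disjoint)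
  obtain ⟨t⟩ := nonempty_linearIsometry_of_finrank_le (𝕜 := 𝕜) (V := A) (W := B) (by omega)
  have hABη : A ⊔ B ≤ ηᗮ :=
    sup_le (inf_orthogonal_map_starProjection_le K η) (inf_orthogonal_map_starProjection_le Kᗮ η)
  have hGη : isometryGraph t ≤ ηᗮ := (isometryGraph_le_sup t).trans hABη
  have hRGη : ∀ g ∈ isometryGraph t, K.reflection g ∈ ηᗮ := fun g hg =>
    hABη (reflection_mem_sup K inf_le_right inf_le_right (isometryGraph_le_sup t hg))
  refine ⟨η.map (K.reflection : E →ₗ[𝕜] E) ⊔ isometryGraph t,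
    hη.map_reflection_sup (isNeutral_isometryGraph t inf_le_right inf_le_right) hGη, ?_,
    hη.map_reflection_sup_inf_eq_bot hGη⟩
  have := finrank_sup_add_finrank_inf_eq (η.map (K.reflection : E →ₗ[𝕜] E)) (isometryGraph t)
  rw [map_reflection_inf_eq_bot K hRGη, finrank_bot, LinearEquiv.finrank_map_eq,
    finrank_isometryGraph t (K.orthogonal_disjoint.mono inf_le_right inf_le_right)] at this
  omega

end Neutral

open Complex in
def twistedDiagEmb (p q : ℕ) : EuclideanSpace ℂ (Fin p) →ₗ[ℂ] bH p q where
  toFun b := WithLp.toLp 2 (Sum.elim b (Sum.elim (fun _ => 0) fun i => I * b i))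
  map_add' x y := by
    ext (i | j | i) <;> simp only [Sum.elim_inl, Sum.elim_inr, PiLp.add_apply] <;> ring
  map_smul' c x := by
    ext (i | j | i) <;> simp only [Sum.elim_inl, Sum.elim_inr, PiLp.smul_apply, smul_eq_mul,
        RingHom.id_apply] <;> ring

def twistedDiag (p q : ℕ) : Submodule ℂ (bH p q) := LinearMap.range (twistedDiagEmb p q)

section twistedDiag

variable {p q : ℕ}

theorem finrank_bH : finrank ℂ (bH p q) = p + q + p := by
  simp only [finrank_euclideanSpace, Fintype.card_sum, Fintype.card_fin, add_assoc]

theorem finrank_twistedDiag : finrank ℂ (twistedDiag p q) = p := by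
  rw [twistedDiag, LinearMap.finrank_range_of_inj, finrank_euclideanSpace_fin]
  intro a b hab
  ext i
  exact congrFun (congrArg WithLp.ofLp hab) (Sum.inl i)

theorem finrank_twistedDiag_orthogonal : finrank ℂ (twistedDiag p q)ᗮ = p + q := by
  have := (twistedDiag p q).finrank_add_finrank_orthogonal
  rw [finrank_twistedDiag, finrank_bH] at this
  omega

open Complex in
theorem starProjection_twistedDiag (x : bH p q) :
    (twistedDiag p q).starProjection x =
      twistedDiagEmb p q (WithLp.toLp 2 fun i => (x (.inl i) - I * x (.inr (.inr i))) / 2) := by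
  refine eq_starProjection_of_mem_of_inner_eq_zero (LinearMap.mem_range_self _ _) ?_
  rintro _ ⟨b, rfl⟩
  simp only [twistedDiagEmb, LinearMap.coe_mk, AddHom.coe_mk, PiLp.inner_apply,
    Fintype.sum_sum_type, PiLp.sub_apply, Sum.elim_inl, Sum.elim_inr, RCLike.inner_apply,
    map_sub, map_mul, map_div₀, map_ofNat, conj_I, zero_mul, Finset.sum_const_zero, zero_add,
    ← Finset.sum_add_distrib]
  refine Finset.sum_eq_zero fun i _ => ?_
  linear_combination (b i * (starRingEnd ℂ (x (.inl i)) + I * starRingEnd ℂ (x (.inr (.inr i))))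
    / 2) * I_sq

open Complex in
theorem JL_eq_smul_reflection (x : bH p q) : JL p q x = -I • (twistedDiag p q).reflection x := by
  rw [Submodule.reflection_apply, starProjection_twistedDiag]
  ext (i | j | i) <;> simp only [JL, twistedDiagEmb, LinearMap.coe_mk, AddHom.coe_mk,
    PiLp.smul_apply, PiLp.sub_apply, Sum.elim_inl, Sum.elim_inr, smul_eq_mul]
  · linear_combination -x (.inr (.inr i)) * I_sq
  · ring
  · linear_combination (x (.inl i) - I * x (.inr (.inr i))) * I_sq

theorem isNeutral_twistedDiag_iff (η : Submodule ℂ (bH p q)) :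
    IsNeutral (twistedDiag p q) η ↔ ∀ h ∈ η, ∀ k ∈ η, ⟪JL p q h, k⟫_ℂ = 0 := by
  simp only [IsNeutral, JL_eq_smul_reflection, inner_smul_left, map_neg, Complex.conj_I, neg_neg,
    mul_eq_zero, Complex.I_ne_zero, false_or]

theorem map_JL_map_reflection (τ : Submodule ℂ (bH p q)) :
    (τ.map ((twistedDiag p q).reflection : bH p q →ₗ[ℂ] bH p q)).map (JL p q) = τ := by
  have : JL p q ∘ₗ ((twistedDiag p q).reflection : bH p q →ₗ[ℂ] bH p q) =
      (-Complex.I) • LinearMap.id :=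
    LinearMap.ext fun x => by
      simpa [reflection_reflection] using JL_eq_smul_reflection ((twistedDiag p q).reflection x)
  rw [← map_comp, this, Submodule.map_smul _ _ _ (neg_ne_zero.mpr Complex.I_ne_zero), map_id]

end twistedDiag

theorem stmt6 (p q : ℕ) (η : Submodule ℂ (bH p q))
    (hSym : ∀ h ∈ η, ∀ k ∈ η, (inner ℂ ((JL p q) h) k : ℂ) = 0) :
    ∃ τ : Submodule ℂ (bH p q),
      (∀ h ∈ (τ.map (JL p q))ᗮ, ∀ k ∈ (τ.map (JL p q))ᗮ, (inner ℂ ((JL p q) h) k : ℂ) = 0) ∧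
      Module.finrank ℂ τ = p + q ∧
      (τ.map (JL p q))ᗮ ⊓ η = ⊥ := by
  obtain ⟨W, hW, hWrank, hWη⟩ :=
    ((isNeutral_twistedDiag_iff η).mpr hSym).exists_isNeutral_finrank_eq_inf_eq_bot
      (by rw [finrank_twistedDiag, finrank_twistedDiag_orthogonal]; omega)
  refine ⟨Wᗮ.map ((twistedDiag p q).reflection : bH p q →ₗ[ℂ] bH p q), ?_, ?_, ?_⟩
  · rw [map_JL_map_reflection, orthogonal_orthogonal]
    exact (isNeutral_twistedDiag_iff W).mp hW
  · have := W.finrank_add_finrank_orthogonal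
    rw [hWrank, finrank_twistedDiag, finrank_bH] at this
    rw [LinearEquiv.finrank_map_eq]
    omega
  · rwa [map_JL_map_reflection, orthogonal_orthogonal]
end
end
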